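/- arXiv:1501.02082 — 2 statements merged into one kernel-verified Lean document; each statement's English description precedes it below -/
import Mathlib

section
/- Let L : [a,b] × ℝ × ℝ → ℝ and φ : [a,b] × ℝ → ℝ be C¹, and suppose x, h : [a,b] → ℝ are C¹ with associated continuous 'derivative' functions D x, D h (representing the combined Caputo derivatives), such that (ε, t) ↦ L(t, x(t)+ε h(t), Dx(t)+ε Dh(t)) is C¹. Define j(ε) = ∫_a^{T+ε ΔT} L(t, x(t)+ε h(t), Dx(t)+ε Dh(t)) dt + φ(T+ε ΔT, (x+ε h)(T+ε ΔT)). Then j is differentiable at 0 with j'(0) = ∫_a^T [∂₂L(t,x(t),Dx(t))·h(t) + ∂₃L(t,x(t),Dx(t))·Dh(t)] dt + L(T,x(T),Dx(T))·ΔT + ∂₁φ(T,x(T))·ΔT + ∂₂φ(T,x(T))·[h(T) + x'(T)·ΔT]. -/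
/-!
Split `∫ₐ^{T+εΔT}` at `T`. Over the fixed interval `[a, T]` one differentiates under the integral
sign. Over `[T, T + εΔT]`, an interval of length `O(ε)`, the integrand is uniformly `o(1)`-close
to its value `L(T, x T, Dx T)` at `(ε, t) = (0, T)` by joint continuity, so this piece is
`L(T, x T, Dx T) · εΔT + o(ε)`. The endpoint term is the chain rule along the curve
`ε ↦ (T + εΔT, (x + εh)(T + εΔT))`, whose velocity at `0` is `(ΔT, h T + x'(T) ΔT)`.
-/

open Set intervalIntegral Filter Topology Function Asymptotics MeasureTheory

section

variable {E : Type*} [NormedAddCommGroup E] [NormedSpace ℝ E]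

theorem hasDerivAt_uncurry_comp {f : ℝ → ℝ → E} {p q : ℝ → ℝ}
    {p' q' ε₀ : ℝ} (hf : DifferentiableAt ℝ (uncurry f) (p ε₀, q ε₀))
    (hp : HasDerivAt p p' ε₀) (hq : HasDerivAt q q' ε₀) :
    HasDerivAt (fun ε => f (p ε) (q ε))
      (p' • deriv (fun s => f s (q ε₀)) (p ε₀)
        + q' • deriv (f (p ε₀)) (q ε₀)) ε₀ := by
  set ℓ := fderiv ℝ (uncurry f) (p ε₀, q ε₀)
  have hℓ : HasFDerivAt (uncurry f) ℓ (p ε₀, q ε₀) := hf.hasFDerivAt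
  have h₁ : HasDerivAt (fun s => f s (q ε₀)) (ℓ (1, 0)) (p ε₀) :=
    (hℓ.comp_hasDerivAt (p ε₀) ((hasDerivAt_id (p ε₀)).prodMk (hasDerivAt_const _ (q ε₀))) :)
  have h₂ : HasDerivAt (f (p ε₀)) (ℓ (0, 1)) (q ε₀) :=
    (hℓ.comp_hasDerivAt (q ε₀) ((hasDerivAt_const _ (p ε₀)).prodMk (hasDerivAt_id (q ε₀))) :)
  have hsplit : ℓ (p', q') = p' • ℓ (1, 0) + q' • ℓ (0, 1) := by
    rw [← ℓ.comp_inl_add_comp_inr]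
    simp [← map_smul]
  rw [h₁.deriv, h₂.deriv, ← hsplit]
  exact hℓ.comp_hasDerivAt ε₀ (hp.prodMk hq)

theorem hasDerivAt_uncurry_comp_line {f : ℝ → ℝ → E} {u v du dv : ℝ}
    (hf : DifferentiableAt ℝ (uncurry f) (u, v)) :
    HasDerivAt (fun ε => f (u + ε * du) (v + ε * dv))
      (du • deriv (fun s => f s v) u + dv • deriv (f u) v) 0 := by
  simpa using hasDerivAt_uncurry_comp (f := f) (ε₀ := 0) (p := fun ε => u + ε * du)
    (q := fun ε => v + ε * dv) (by simpa using hf) ((hasDerivAt_mul_const du).const_add u)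
    ((hasDerivAt_mul_const dv).const_add v)

theorem hasDerivAt_id_smul_of_continuousAt {g : ℝ → E} (hg : ContinuousAt g 0) :
    HasDerivAt (fun ε : ℝ => ε • g ε) (g 0) 0 := by
  rw [hasDerivAt_iff_isLittleO]
  have hsmall : (fun ε => g ε - g 0) =o[𝓝 0] fun _ => (1 : ℝ) :=
    (isLittleO_one_iff ℝ).2 (tendsto_sub_nhds_zero_iff.2 hg)
  simpa [smul_sub] using (isBigO_refl (fun ε : ℝ => ε) (𝓝 0)).smul_isLittleO hsmall

theorem hasDerivAt_integral_of_contDiff_uncurry {F : ℝ → ℝ → E}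
    (hF : ContDiff ℝ 1 (uncurry F)) (a b ε₀ : ℝ) :
    HasDerivAt (fun ε => ∫ t in a..b, F ε t) (∫ t in a..b, deriv (fun ε => F ε t) ε₀) ε₀ := by
  set F' : ℝ → ℝ → E := fun ε t => fderiv ℝ (uncurry F) (ε, t) (1, 0)
  have hF'c : Continuous (uncurry F') :=
    (hF.continuous_fderiv one_ne_zero).clm_apply continuous_const
  have hF' : ∀ ε t, HasDerivAt (fun e => F e t) (F' ε t) ε := fun ε t =>
    ((hF.differentiable one_ne_zero (ε, t)).hasFDerivAt.comp_hasDerivAt ε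
      ((hasDerivAt_id ε).prodMk (hasDerivAt_const ε t)) :)
  obtain ⟨C, hC⟩ := (isCompact_Icc.prod isCompact_uIcc).exists_bound_of_continuousOn
    (s := Icc (ε₀ - 1) (ε₀ + 1) ×ˢ uIcc a b) hF'c.continuousOn
  have hdom := hasDerivAt_integral_of_dominated_loc_of_deriv_le (μ := volume)
    (bound := fun _ => C) (Icc_mem_nhds (by linarith) (by linarith))
    (Eventually.of_forall fun ε => (hF.continuous.uncurry_left ε).aestronglyMeasurable)
    ((hF.continuous.uncurry_left ε₀).intervalIntegrable a b)
    (hF'c.uncurry_left ε₀).aestronglyMeasurable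
    (ae_of_all _ fun t ht ε hε => hC (ε, t) ⟨hε, uIoc_subset_uIcc ht⟩)
    intervalIntegrable_const (ae_of_all _ fun t _ ε _ => hF' ε t)
  simpa only [fun t => (hF' ε₀ t).deriv] using hdom.2

variable [CompleteSpace E]

theorem hasDerivAt_integral_from_base_of_continuousAt {F : ℝ → ℝ → E} {u : ℝ → ℝ}
    {u' ε₀ : ℝ} (hF : ContinuousAt (uncurry F) (ε₀, u ε₀))
    (hFi : ∀ᶠ ε in 𝓝 ε₀, IntervalIntegrable (F ε) volume (u ε₀) (u ε))
    (hu : HasDerivAt u u' ε₀) :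
    HasDerivAt (fun ε => ∫ t in u ε₀..u ε, F ε t) (u' • F ε₀ (u ε₀)) ε₀ := by
  set c := F ε₀ (u ε₀)
  have hrem : (fun ε => (∫ t in u ε₀..u ε, F ε t) - (u ε - u ε₀) • c)
      =o[𝓝 ε₀] fun ε => u ε - u ε₀ := by
    refine isLittleO_iff.2 fun η hη => ?_
    obtain ⟨δ, hδ, hclose⟩ := Metric.continuousAt_iff.1 hF η hη
    have hu_near : ∀ᶠ ε in 𝓝 ε₀, dist (u ε) (u ε₀) < δ :=
      hu.continuousAt.eventually (Metric.ball_mem_nhds _ hδ)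
    filter_upwards [hFi, Metric.ball_mem_nhds ε₀ hδ, hu_near] with ε hεi hε hεu
    rw [← intervalIntegral.integral_const, ← integral_sub hεi intervalIntegrable_const]
    refine (intervalIntegral.norm_integral_le_of_norm_le_const fun t ht => ?_).trans_eq
      (by rw [Real.norm_eq_abs])
    have ht' : dist t (u ε₀) < δ := by
      rw [Real.dist_eq] at hεu ⊢
      exact (abs_sub_left_of_mem_uIcc (uIoc_subset_uIcc ht)).trans_lt hεu
    rw [← dist_eq_norm]
    exact (hclose (x := (ε, t)) (by rw [Prod.dist_eq]; exact max_lt hε ht')).le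
  have hR : HasDerivAt (fun ε => (∫ t in u ε₀..u ε, F ε t) - (u ε - u ε₀) • c) 0 ε₀ := by
    rw [hasDerivAt_iff_isLittleO]
    simpa using hrem.trans_isBigO hu.isBigO_sub
  convert ((hu.sub_const (u ε₀)).smul_const c).add hR using 1
  · funext ε
    simp
  · simp

theorem hasDerivAt_integral_leibniz {F : ℝ → ℝ → E} {u : ℝ → ℝ} {u' ε₀ : ℝ}
    (hF : ContDiff ℝ 1 (uncurry F)) (a : ℝ) (hu : HasDerivAt u u' ε₀) :
    HasDerivAt (fun ε => ∫ t in a..u ε, F ε t)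
      ((∫ t in a..u ε₀, deriv (fun ε => F ε t) ε₀) + u' • F ε₀ (u ε₀)) ε₀ := by
  have hint : ∀ ε c d, IntervalIntegrable (F ε) volume c d := fun ε c d =>
    (hF.continuous.uncurry_left ε).intervalIntegrable c d
  have hsplit : (fun ε => ∫ t in a..u ε, F ε t)
      = fun ε => (∫ t in a..u ε₀, F ε t) + ∫ t in u ε₀..u ε, F ε t := by
    funext ε
    exact (integral_add_adjacent_intervals (hint _ _ _) (hint _ _ _)).symm
  rw [hsplit]
  exact (hasDerivAt_integral_of_contDiff_uncurry hF a (u ε₀) ε₀).add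
    (hasDerivAt_integral_from_base_of_continuousAt hF.continuous.continuousAt
      (Eventually.of_forall fun ε => hint ε _ _) hu)

end

theorem first_variation_general (a T ΔT : ℝ)
    (L : ℝ → ℝ → ℝ → ℝ) (φ : ℝ → ℝ → ℝ)
    (hL : ContDiff ℝ 1 (fun p : ℝ × ℝ × ℝ => L p.1 p.2.1 p.2.2))
    (hφ : ContDiff ℝ 1 (fun p : ℝ × ℝ => φ p.1 p.2))
    (x h : ℝ → ℝ) (hx : ContDiff ℝ 1 x) (hh : ContDiff ℝ 1 h)
    (Dx Dh : ℝ → ℝ)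
    (hmix : ContDiff ℝ 1 (fun p : ℝ × ℝ =>
      L p.2 (x p.2 + p.1 * h p.2) (Dx p.2 + p.1 * Dh p.2))) :
    HasDerivAt
      (fun ε : ℝ =>
        (∫ t in a..(T + ε * ΔT), L t (x t + ε * h t) (Dx t + ε * Dh t))
          + φ (T + ε * ΔT) (x (T + ε * ΔT) + ε * h (T + ε * ΔT)))
      ((∫ t in a..T,
          deriv (fun u => L t u (Dx t)) (x t) * h t
            + deriv (fun v => L t (x t) v) (Dx t) * Dh t)
        + L T (x T) (Dx T) * ΔT
        + deriv (fun s => φ s (x T)) T * ΔT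
        + deriv (fun u => φ T u) (x T) * (h T + deriv x T * ΔT))
      0 := by
  have hu : HasDerivAt (fun ε : ℝ => T + ε * ΔT) ΔT 0 := by
    simpa using (hasDerivAt_mul_const ΔT).const_add T
  have hT : T + 0 * ΔT = T := by ring
  have hcurve : HasDerivAt (fun ε => x (T + ε * ΔT) + ε * h (T + ε * ΔT))
      (deriv x T * ΔT + h T) 0 := by
    refine ((hx.differentiable one_ne_zero T).hasDerivAt.comp_of_eq 0 hu hT.symm).add ?_
    simpa [hT] using
      hasDerivAt_id_smul_of_continuousAt (hh.continuous.continuousAt.comp_of_eq hu.continuousAt hT)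
  have hLε : ∀ t, deriv (fun ε => L t (x t + ε * h t) (Dx t + ε * Dh t)) 0
      = deriv (fun u => L t u (Dx t)) (x t) * h t
        + deriv (fun v => L t (x t) v) (Dx t) * Dh t := by
    intro t
    have hLt : DifferentiableAt ℝ (uncurry (L t)) (x t, Dx t) :=
      (hL.differentiable one_ne_zero _).comp (f := fun q : ℝ × ℝ => (t, q)) _
        ((differentiableAt_const t).prodMk differentiableAt_id)
    simp only [(hasDerivAt_uncurry_comp_line hLt).deriv, smul_eq_mul]
    ring
  refine ((hasDerivAt_integral_leibniz (F := fun ε t => L t (x t + ε * h t) (Dx t + ε * Dh t))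
    hmix a hu).add (hasDerivAt_uncurry_comp (hφ.differentiable one_ne_zero _) hu hcurve)
    ).congr_deriv ?_
  simp only [zero_mul, add_zero, smul_eq_mul, hLε]
  ring

/-- the first variation j'(0) for the free-time functional. -/
theorem first_variation (a b T ΔT : ℝ) (haT : a < T) (hTb : T < b)
    (L : ℝ → ℝ → ℝ → ℝ) (φ : ℝ → ℝ → ℝ)
    (hL : ContDiff ℝ 1 (fun p : ℝ × ℝ × ℝ => L p.1 p.2.1 p.2.2))
    (hφ : ContDiff ℝ 1 (fun p : ℝ × ℝ => φ p.1 p.2))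
    (x h : ℝ → ℝ) (hx : ContDiff ℝ 1 x) (hh : ContDiff ℝ 1 h)
    (Dx Dh : ℝ → ℝ) (hDx : Continuous Dx) (hDh : Continuous Dh)
    (hmix : ContDiff ℝ 1 (fun p : ℝ × ℝ =>
      L p.2 (x p.2 + p.1 * h p.2) (Dx p.2 + p.1 * Dh p.2))) :
    HasDerivAt
      (fun ε : ℝ =>
        (∫ t in a..(T + ε * ΔT), L t (x t + ε * h t) (Dx t + ε * Dh t))
          + φ (T + ε * ΔT) (x (T + ε * ΔT) + ε * h (T + ε * ΔT)))
      ((∫ t in a..T,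
          deriv (fun u => L t u (Dx t)) (x t) * h t
            + deriv (fun v => L t (x t) v) (Dx t) * Dh t)
        + L T (x T) (Dx T) * ΔT
        + deriv (fun s => φ s (x T)) T * ΔT
        + deriv (fun u => φ T u) (x T) * (h T + deriv x T * ΔT))
      0 :=
  first_variation_general a T ΔT L φ hL hφ x h hx hh Dx Dh hmix
end

section
/- Let α ∈ (0,1) be constant and x, y ∈ C¹([a,b]). Then ∫_a^b y(t)·(ᶜₐD_t^α x)(t) dt = ∫_a^b x(t)·(_tD_b^α y)(t) dt + [x(t)·(_tI_b^{1−α} y)(t)]_{t=a}^{t=b}, where ᶜₐD_t^α is the left Caputo derivative, _tD_b^α the right Riemann–Liouville derivative, and _tI_b^{1−α} the right Riemann–Liouville integral of order 1−α. -/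
/-!
Fubini on the triangle `a < τ < t ≤ b`, where the kernel `(t - τ) ^ (-α)` is integrable since
`α < 1`, moves the kernel from `x'` onto `y`: the left side becomes `∫ x' · I` with
`I s = ∫_s^b (τ - s) ^ (-α) y τ dτ`, and ordinary integration by parts produces the boundary term
and `-∫ x · I'`. The work lies in differentiating `I`: integrating by parts inside `I` and applying
Fubini once more gives `I s = (b - s) ^ (1 - α) / (1 - α) · y b - ∫_s^b I[y'] σ dσ`, where `I[y']`
is continuous, so `I' s = -(b - s) ^ (-α) · y b + I[y'] s`.
-/

open Real Set intervalIntegral MeasureTheory Function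

namespace FractionalCalculus

def triangle (a b : ℝ) : Set (ℝ × ℝ) := {p | a < p.2 ∧ p.2 < p.1 ∧ p.1 ≤ b}

lemma measurableSet_triangle (a b : ℝ) : MeasurableSet (triangle a b) :=
  (measurableSet_lt measurable_const measurable_snd).inter
    ((measurableSet_lt measurable_snd measurable_fst).inter
      (measurableSet_le measurable_fst measurable_const))

lemma triangle_subset_Icc_prod_Icc (a b : ℝ) : triangle a b ⊆ Icc a b ×ˢ Icc a b :=
  fun _ ⟨h₁, h₂, h₃⟩ => ⟨⟨by linarith, h₃⟩, ⟨h₁.le, by linarith⟩⟩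

lemma indicator_triangle_apply (a b : ℝ) (F : ℝ → ℝ → ℝ) (t τ : ℝ) :
    (triangle a b).indicator (uncurry F) (t, τ)
      = (Ioc a b).indicator (fun t => (Ioo a t).indicator (F t) τ) t := by
  simp only [indicator, triangle, mem_ofPred_eq, mem_Ioc, mem_Ioo, uncurry_apply_pair]
  grind

lemma indicator_triangle_apply' (a b : ℝ) (F : ℝ → ℝ → ℝ) (t τ : ℝ) :
    (triangle a b).indicator (uncurry F) (t, τ)
      = (Ioc a b).indicator (fun τ => (Ioc τ b).indicator (F · τ) t) τ := by
  simp only [indicator, triangle, mem_ofPred_eq, mem_Ioc, uncurry_apply_pair]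
  grind

lemma integral_indicator_triangle_left (a b : ℝ) (F : ℝ → ℝ → ℝ) (t : ℝ) :
    ∫ τ, (triangle a b).indicator (uncurry F) (t, τ)
      = (Ioc a b).indicator (fun t => ∫ τ in a..t, F t τ) t := by
  simp_rw [indicator_triangle_apply]
  by_cases ht : t ∈ Ioc a b
  · simp_rw [indicator_of_mem ht, MeasureTheory.integral_indicator measurableSet_Ioo,
      integral_of_le ht.1.le, integral_Ioc_eq_integral_Ioo]
  · simp_rw [indicator_of_notMem ht, integral_zero]

lemma integral_indicator_triangle_right (a b : ℝ) (F : ℝ → ℝ → ℝ) (τ : ℝ) :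
    ∫ t, (triangle a b).indicator (uncurry F) (t, τ)
      = (Ioc a b).indicator (fun τ => ∫ t in τ..b, F t τ) τ := by
  simp_rw [indicator_triangle_apply']
  by_cases hτ : τ ∈ Ioc a b
  · simp_rw [indicator_of_mem hτ, MeasureTheory.integral_indicator measurableSet_Ioc,
      integral_of_le hτ.2]
  · simp_rw [indicator_of_notMem hτ, integral_zero]

theorem integral_integral_swap_triangle {a b : ℝ} (hab : a ≤ b) {F : ℝ → ℝ → ℝ}
    (hF : IntegrableOn (uncurry F) (triangle a b)) :
    ∫ t in a..b, ∫ τ in a..t, F t τ = ∫ τ in a..b, ∫ t in τ..b, F t τ := by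
  have hswap := integral_integral_swap
    (f := fun t τ => (triangle a b).indicator (uncurry F) (t, τ))
    ((integrable_indicator_iff (measurableSet_triangle a b)).2 hF)
  simp only [integral_indicator_triangle_left, integral_indicator_triangle_right,
    MeasureTheory.integral_indicator measurableSet_Ioc] at hswap
  rwa [integral_of_le hab, integral_of_le hab]

variable {α : ℝ}

lemma intervalIntegrable_rpow_neg_sub (hα : α < 1) (t c d : ℝ) :
    IntervalIntegrable (fun τ => (t - τ) ^ (-α)) volume c d := by
  simpa using (intervalIntegrable_rpow' (a := t - c) (b := t - d) (r := -α)
    (by linarith)).comp_sub_left t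

lemma intervalIntegrable_sub_rpow_neg (hα : α < 1) (s c d : ℝ) :
    IntervalIntegrable (fun τ => (τ - s) ^ (-α)) volume c d := by
  simpa using (intervalIntegrable_rpow' (a := c - s) (b := d - s) (r := -α)
    (by linarith)).comp_sub_right s

lemma integral_rpow_neg_sub (hα : α < 1) (s t : ℝ) :
    ∫ τ in s..t, (t - τ) ^ (-α) = (t - s) ^ (1 - α) / (1 - α) := by
  rw [intervalIntegral.integral_comp_sub_left (fun u => u ^ (-α)) t, sub_self,
    integral_rpow (Or.inl (by linarith)), zero_rpow (by linarith), neg_add_eq_sub]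
  ring

/-- `(t - τ) ^ (-α)` on the triangle is a convolution integrand `k (t - τ)` with `k ∈ L¹`. -/
lemma integrableOn_triangle_rpow_neg_sub (hα : α < 1) (a b : ℝ) :
    IntegrableOn (fun p : ℝ × ℝ => (p.1 - p.2) ^ (-α)) (triangle a b) := by
  set k := (Ioc 0 (b - a)).indicator fun u : ℝ => u ^ (-α)
  have hk : Integrable k :=
    (integrable_indicator_iff measurableSet_Ioc).2 (intervalIntegrable_rpow' (by linarith)).1
  have hconv : IntegrableOn (fun p : ℝ × ℝ => k (p.1 - p.2)) (univ ×ˢ Ioc a b) := by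
    have := (integrable_const (1 : ℝ) (μ := volume.restrict (Ioc a b))).convolution_integrand
      (ContinuousLinearMap.mul ℝ ℝ) hk
    rw [← Measure.restrict_univ (μ := volume), Measure.prod_restrict, Measure.restrict_univ,
      ← Measure.volume_eq_prod] at this
    simpa [IntegrableOn] using this
  have hsub : triangle a b ⊆ univ ×ˢ Ioc a b := fun p ⟨h₁, h₂, h₃⟩ =>
    ⟨mem_univ _, h₁, by linarith⟩
  refine (hconv.mono_set hsub).congr_fun (fun p hp => ?_) (measurableSet_triangle a b)
  obtain ⟨h₁, h₂, h₃⟩ := hp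
  exact indicator_of_mem (show p.1 - p.2 ∈ Ioc 0 (b - a) from ⟨by linarith, by linarith⟩) _

theorem integral_mul_integral_rpow_neg_sub_comm (hα : α < 1) {f g : ℝ → ℝ}
    (hf : Continuous f) (hg : Continuous g) {a b : ℝ} (hab : a ≤ b) :
    ∫ t in a..b, f t * ∫ τ in a..t, (t - τ) ^ (-α) * g τ
      = ∫ τ in a..b, g τ * ∫ t in τ..b, (t - τ) ^ (-α) * f t := by
  have hF : IntegrableOn (uncurry fun t τ => (t - τ) ^ (-α) * (f t * g τ)) (triangle a b) :=
    (integrableOn_triangle_rpow_neg_sub hα a b).mul_continuousOn_of_subset (by fun_prop)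
      (measurableSet_triangle a b) (isCompact_Icc.prod isCompact_Icc)
      (triangle_subset_Icc_prod_Icc a b)
  convert integral_integral_swap_triangle hab hF using 2 <;> ext <;>
    rw [← intervalIntegral.integral_const_mul] <;> congr 1 <;> ext <;> ring

theorem continuous_intervalIntegral_mul_of_continuous {X : Type*} [TopologicalSpace X]
    [FirstCountableTopology X] [LocallyCompactSpace X] {k : ℝ → ℝ} {c d : ℝ}
    (hk : IntervalIntegrable k volume c d) {G : X → ℝ → ℝ} (hG : Continuous (uncurry G)) :
    Continuous fun x => ∫ v in c..d, k v * G x v := by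
  refine continuous_iff_continuousAt.2 fun x₀ => ?_
  obtain ⟨U, hU, hUx₀⟩ := exists_compact_mem_nhds x₀
  obtain ⟨C, hC⟩ := (hU.prod isCompact_uIcc).exists_bound_of_continuousOn hG.continuousOn
  refine continuousAt_of_dominated_interval (bound := fun v => ‖k v‖ * C)
    (Filter.Eventually.of_forall fun x => ?_) ?_ (hk.norm.mul_const C)
    (Filter.Eventually.of_forall fun v _ => by fun_prop)
  · exact hk.def'.aestronglyMeasurable.mul (by fun_prop : Continuous (G x)).aestronglyMeasurable
  · filter_upwards [hUx₀] with x hx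
    refine Filter.Eventually.of_forall fun v hv => ?_
    rw [norm_mul]
    exact mul_le_mul_of_nonneg_left (hC (x, v) ⟨hx, uIoc_subset_uIcc hv⟩) (norm_nonneg _)

lemma hasDerivAt_rpow_one_sub_div (hα : α ≠ 1) {f : ℝ → ℝ} {f' x : ℝ} (hf : HasDerivAt f f' x)
    (hfx : f x ≠ 0) :
    HasDerivAt (fun y => f y ^ (1 - α) / (1 - α)) (f' * f x ^ (-α)) x := by
  have h := (hf.rpow_const (p := 1 - α) (Or.inl hfx)).div_const (1 - α)
  rwa [sub_sub_cancel_left, mul_right_comm, mul_div_cancel_right₀ _ (sub_ne_zero.2 hα.symm)] at h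

/-- The right Riemann–Liouville integral of order `1 - α` without its normalisation:
`(_sI_b^{1-α} w) = rightRLIntegral α b w s / Γ(1 - α)`. -/
noncomputable def rightRLIntegral (α b : ℝ) (w : ℝ → ℝ) (s : ℝ) : ℝ :=
  ∫ τ in s..b, (τ - s) ^ (-α) * w τ

/-- The substitution `τ = σ + (b - σ) v` moves the dependence on `σ` out of the singular kernel. -/
lemma rightRLIntegral_eq_rpow_mul_integral_unitInterval (w : ℝ → ℝ) {b σ : ℝ}
    (hα : α < 1) (hσ : σ ≤ b) :
    rightRLIntegral α b w σ
      = (b - σ) ^ (1 - α) * ∫ v in (0 : ℝ)..1, v ^ (-α) * w (σ + (b - σ) * v) := by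
  rcases hσ.eq_or_lt with rfl | hσ
  · simp [rightRLIntegral, zero_rpow (by linarith : 1 - α ≠ 0)]
  set L := b - σ
  have hL : 0 < L := sub_pos.2 hσ
  have hscale : ∀ v ∈ uIcc (0 : ℝ) 1,
      (σ + L * v - σ) ^ (-α) * w (σ + L * v) = L ^ (-α) * (v ^ (-α) * w (σ + L * v)) := by
    intro v hv
    rw [uIcc_of_le zero_le_one] at hv
    rw [add_sub_cancel_left, mul_rpow hL.le hv.1, mul_assoc]
  have hsub := intervalIntegral.integral_comp_add_mul (fun τ => (τ - σ) ^ (-α) * w τ) hL.ne' σ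
    (a := 0) (b := 1)
  rw [integral_congr hscale, intervalIntegral.integral_const_mul, mul_zero, mul_one, add_zero,
    show σ + L = b by ring, smul_eq_mul] at hsub
  rw [rightRLIntegral, show 1 - α = -α + 1 by ring, rpow_add_one hL.ne', mul_comm _ L, mul_assoc,
    hsub, mul_inv_cancel_left₀ hL.ne']

lemma continuousOn_rightRLIntegral (hα : α < 1) (b : ℝ) {w : ℝ → ℝ} (hw : Continuous w) :
    ContinuousOn (rightRLIntegral α b w) (Iic b) := by
  have hP : Continuous fun σ => ∫ v in (0 : ℝ)..1, v ^ (-α) * w (σ + (b - σ) * v) :=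
    continuous_intervalIntegral_mul_of_continuous (intervalIntegrable_rpow' (by linarith))
      (G := fun σ v => w (σ + (b - σ) * v)) (by fun_prop)
  have hK : Continuous fun σ : ℝ => (b - σ) ^ (1 - α) :=
    (continuous_const.sub continuous_id).rpow_const fun _ => Or.inr (by linarith)
  exact (hK.mul hP).continuousOn.congr fun σ hσ =>
    rightRLIntegral_eq_rpow_mul_integral_unitInterval w hα hσ

lemma rightRLIntegral_eq_sub_integral_deriv (hα : α < 1) {y : ℝ → ℝ} (hy : ContDiff ℝ 1 y)
    {b s : ℝ} (hsb : s ≤ b) :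
    rightRLIntegral α b y s
      = (b - s) ^ (1 - α) / (1 - α) * y b
        - ∫ τ in s..b, (τ - s) ^ (1 - α) / (1 - α) * deriv y τ := by
  have hK : ∀ τ ∈ Ioo (min s b) (max s b),
      HasDerivAt (fun τ => (τ - s) ^ (1 - α) / (1 - α)) ((τ - s) ^ (-α)) τ := by
    intro τ hτ
    rw [min_eq_left hsb] at hτ
    simpa using hasDerivAt_rpow_one_sub_div hα.ne ((hasDerivAt_id τ).sub_const s)
      (sub_ne_zero.2 hτ.1.ne')
  have hparts := integral_mul_deriv_eq_deriv_mul_of_hasDerivAt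
    (v := fun τ => (τ - s) ^ (1 - α) / (1 - α)) hy.continuous.continuousOn
    ((continuous_id.sub continuous_const).rpow_const (fun _ => Or.inr (by linarith))
      |>.div_const (1 - α)).continuousOn
    (fun τ _ => (hy.differentiable one_ne_zero τ).hasDerivAt) hK
    ((hy.continuous_deriv le_rfl).intervalIntegrable _ _)
    (intervalIntegrable_sub_rpow_neg hα s s b)
  rw [rightRLIntegral, integral_congr fun τ _ => mul_comm _ _, hparts, sub_self,
    zero_rpow (by linarith), zero_div, mul_zero, sub_zero, mul_comm (y b)]
  congr 1
  exact integral_congr fun τ _ => mul_comm _ _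

lemma rightRLIntegral_eq_sub_integral_rightRLIntegral_deriv (hα : α < 1) {y : ℝ → ℝ}
    (hy : ContDiff ℝ 1 y) {b s : ℝ} (hsb : s ≤ b) :
    rightRLIntegral α b y s
      = (b - s) ^ (1 - α) / (1 - α) * y b - ∫ σ in s..b, rightRLIntegral α b (deriv y) σ := by
  have hfub := integral_mul_integral_rpow_neg_sub_comm hα (hy.continuous_deriv le_rfl)
    continuous_const hsb (g := fun _ => 1)
  simp only [mul_one, one_mul, integral_rpow_neg_sub hα, mul_comm (deriv y _)] at hfub
  rw [rightRLIntegral_eq_sub_integral_deriv hα hy hsb, hfub]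
  rfl

lemma hasDerivAt_rightRLIntegral (hα : α < 1) {y : ℝ → ℝ} (hy : ContDiff ℝ 1 y) {b t : ℝ}
    (ht : t < b) :
    HasDerivAt (rightRLIntegral α b y)
      (-(b - t) ^ (-α) * y b + rightRLIntegral α b (deriv y) t) t := by
  have hJ := continuousOn_rightRLIntegral hα b (hy.continuous_deriv le_rfl)
  have hK : HasDerivAt (fun s => (b - s) ^ (1 - α) / (1 - α) * y b)
      (-(b - t) ^ (-α) * y b) t := by
    simpa using (hasDerivAt_rpow_one_sub_div hα.ne ((hasDerivAt_id t).const_sub b)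
      (sub_ne_zero.2 ht.ne')).mul_const (y b)
  have hprim : HasDerivAt (fun s => ∫ σ in s..b, rightRLIntegral α b (deriv y) σ)
      (-rightRLIntegral α b (deriv y) t) t :=
    integral_hasDerivAt_left
      (hJ.mono (by simpa [uIcc_of_le ht.le] using Icc_subset_Iic_self)).intervalIntegrable
      ((hJ.mono Iio_subset_Iic_self).stronglyMeasurableAtFilter isOpen_Iio t ht)
      (hJ.continuousAt (Iic_mem_nhds ht))
  have h := hK.sub hprim
  rw [sub_neg_eq_add] at h
  refine h.congr_of_eventuallyEq ?_
  filter_upwards [Iic_mem_nhds ht] with s hs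
  exact rightRLIntegral_eq_sub_integral_rightRLIntegral_deriv hα hy hs

theorem integral_mul_caputo_eq (hα : α < 1) {x y : ℝ → ℝ} (hx : ContDiff ℝ 1 x)
    (hy : ContDiff ℝ 1 y) {a b : ℝ} (hab : a ≤ b) :
    ∫ t in a..b, y t * ∫ τ in a..t, (t - τ) ^ (-α) * deriv x τ
      = -(∫ t in a..b, x t * deriv (rightRLIntegral α b y) t)
        + (x b * rightRLIntegral α b y b - x a * rightRLIntegral α b y a) := by
  have hI := continuousOn_rightRLIntegral hα b hy.continuous
  have hJ := continuousOn_rightRLIntegral hα b (hy.continuous_deriv le_rfl)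
  have hsub : uIcc a b ⊆ Iic b := by simpa [uIcc_of_le hab] using Icc_subset_Iic_self
  have hI' : ∀ t ∈ Ioo (min a b) (max a b), HasDerivAt (rightRLIntegral α b y)
      (-(b - t) ^ (-α) * y b + rightRLIntegral α b (deriv y) t) t :=
    fun t ht => hasDerivAt_rightRLIntegral hα hy (lt_of_lt_of_le ht.2 (max_le hab le_rfl))
  have hI'int : IntervalIntegrable
      (fun t => -(b - t) ^ (-α) * y b + rightRLIntegral α b (deriv y) t) volume a b :=
    ((intervalIntegrable_rpow_neg_sub hα b a b).neg.mul_const (y b)).add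
      ((hJ.mono hsub).intervalIntegrable)
  have hfub : ∫ t in a..b, y t * ∫ τ in a..t, (t - τ) ^ (-α) * deriv x τ
      = ∫ t in a..b, deriv x t * rightRLIntegral α b y t :=
    integral_mul_integral_rpow_neg_sub_comm hα hy.continuous (hx.continuous_deriv le_rfl) hab
  have hderiv : ∫ t in a..b, x t * deriv (rightRLIntegral α b y) t
      = ∫ t in a..b, x t * (-(b - t) ^ (-α) * y b + rightRLIntegral α b (deriv y) t) :=
    integral_congr_uIoo fun t ht => by rw [(hI' t ht).deriv]
  rw [hfub, hderiv, integral_mul_deriv_eq_deriv_mul_of_hasDerivAt hx.continuous.continuousOn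
    (hI.mono hsub) (fun t _ => (hx.differentiable one_ne_zero t).hasDerivAt) hI'
    ((hx.continuous_deriv le_rfl).intervalIntegrable _ _) hI'int]
  ring

end FractionalCalculus

open FractionalCalculus

theorem frac_int_by_parts_left_general (a b : ℝ) (hab : a < b) (α : ℝ)
    (hα1 : α < 1) (x y : ℝ → ℝ)
    (hx : ContDiff ℝ 1 x) (hy : ContDiff ℝ 1 y) :
    (∫ t in a..b, y t * ((1 / Real.Gamma (1 - α)) * ∫ τ in a..t, (t - τ) ^ (-α) * deriv x τ))
      = (∫ t in a..b, x t *
          (-(deriv (fun s => (1 / Real.Gamma (1 - α)) * ∫ τ in s..b, (τ - s) ^ (-α) * y τ) t)))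
        + (x b * ((1 / Real.Gamma (1 - α)) * ∫ τ in b..b, (τ - b) ^ (-α) * y τ)
            - x a * ((1 / Real.Gamma (1 - α)) * ∫ τ in a..b, (τ - a) ^ (-α) * y τ)) := by
  have h := integral_mul_caputo_eq hα1 hx hy hab.le
  unfold rightRLIntegral at h
  simp only [deriv_const_mul_field', mul_neg, intervalIntegral.integral_neg, mul_left_comm (y _),
    mul_left_comm (x _), intervalIntegral.integral_const_mul]
  linear_combination (1 / Gamma (1 - α)) * h

/-- fractional integration by parts (left Caputo / right
Riemann–Liouville), constant order α ∈ (0,1). -/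
theorem frac_int_by_parts_left (a b : ℝ) (hab : a < b) (α : ℝ)
    (hα : 0 < α) (hα1 : α < 1) (x y : ℝ → ℝ)
    (hx : ContDiff ℝ 1 x) (hy : ContDiff ℝ 1 y) :
    (∫ t in a..b, y t * ((1 / Real.Gamma (1 - α)) * ∫ τ in a..t, (t - τ) ^ (-α) * deriv x τ))
      = (∫ t in a..b, x t *
          (-(deriv (fun s => (1 / Real.Gamma (1 - α)) * ∫ τ in s..b, (τ - s) ^ (-α) * y τ) t)))
        + (x b * ((1 / Real.Gamma (1 - α)) * ∫ τ in b..b, (τ - b) ^ (-α) * y τ)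
            - x a * ((1 / Real.Gamma (1 - α)) * ∫ τ in a..b, (τ - a) ^ (-α) * y τ)) :=
  frac_int_by_parts_left_general a b hab α hα1 x y hx hy
end
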